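/- arXiv:2411.09832 — 2 statements merged into one kernel-verified Lean document; each statement's English description precedes it below -/
import Mathlib

section
/- An orientation O of an interval hypergraph 𝕀 on [n] is acyclic if and only if there are no I, J ∈ 𝕀 such that O(I) ∈ J ∖ {O(J)} and O(J) ∈ I ∖ {O(I)}. -/
namespace IHL

/-- The hyperedges of a hypergraph, as a subtype. -/
abbrev Edge (𝕀 : Finset (Finset ℕ)) : Type := {H : Finset ℕ // H ∈ 𝕀}

/-- `ℋ` is a hypergraph on `[n] = {1,…,n}`: hyperedges are nonempty subsets of `[n]`
and all singletons belong to `ℋ`. -/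
def IsHypergraph (n : ℕ) (ℋ : Finset (Finset ℕ)) : Prop :=
  (∀ H ∈ ℋ, H.Nonempty ∧ H ⊆ Finset.Icc 1 n) ∧
    ∀ i, 1 ≤ i → i ≤ n → ({i} : Finset ℕ) ∈ ℋ

/-- `𝕀` is an interval hypergraph on `[n]`: hyperedges are intervals `[a,b] ⊆ [n]`
and all singletons belong to `𝕀`. -/
def IsIntervalHypergraph (n : ℕ) (𝕀 : Finset (Finset ℕ)) : Prop :=
  (∀ H ∈ 𝕀, ∃ a b, 1 ≤ a ∧ a ≤ b ∧ b ≤ n ∧ H = Finset.Icc a b) ∧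
    ∀ i, 1 ≤ i → i ≤ n → ({i} : Finset ℕ) ∈ 𝕀

/-- An orientation assigns to each hyperedge one of its elements. -/
def IsOrientation (𝕀 : Finset (Finset ℕ)) (O : Edge 𝕀 → ℕ) : Prop :=
  ∀ H : Edge 𝕀, O H ∈ H.1

/-- Acyclicity: there is no cyclic sequence `H_0, …, H_k` with `k ≥ 2`, `H_k = H_0`, and
`O (H (p+1)) ∈ H p \ {O (H p)}` for all `p < k`. -/
def IsAcyclic (𝕀 : Finset (Finset ℕ)) (O : Edge 𝕀 → ℕ) : Prop :=
  ¬∃ (k : ℕ) (H : ℕ → Edge 𝕀), 2 ≤ k ∧ H k = H 0 ∧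
    ∀ p < k, O (H (p + 1)) ∈ (H p).1 ∧ O (H (p + 1)) ≠ O (H p)

/-- An acyclic orientation, i.e. an element of the hypergraphic poset. -/
def AcycOr (𝕀 : Finset (Finset ℕ)) (O : Edge 𝕀 → ℕ) : Prop :=
  IsOrientation 𝕀 O ∧ IsAcyclic 𝕀 O

/-- Increasing flip from `O` to `O'` flipping `i` to `j`. -/
def IsIncFlip (n : ℕ) (𝕀 : Finset (Finset ℕ)) (i j : ℕ) (O O' : Edge 𝕀 → ℕ) : Prop :=
  O ≠ O' ∧ 1 ≤ i ∧ i < j ∧ j ≤ n ∧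
    ∀ H : Edge 𝕀,
      (O H ≠ O' H → O H = i ∧ O' H = j) ∧
      (i ∈ H.1 → j ∈ H.1 → (O H = i ↔ O' H = j))

/-- One increasing flip step between acyclic orientations. -/
def FlipStep (n : ℕ) (𝕀 : Finset (Finset ℕ)) (O O' : Edge 𝕀 → ℕ) : Prop :=
  AcycOr 𝕀 O ∧ AcycOr 𝕀 O' ∧ ∃ i j, IsIncFlip n 𝕀 i j O O'

/-- The order of the hypergraphic poset `P_𝕀`: reflexive-transitive closure of
the increasing flip relation on acyclic orientations. -/
def leP (n : ℕ) (𝕀 : Finset (Finset ℕ)) : (Edge 𝕀 → ℕ) → (Edge 𝕀 → ℕ) → Prop :=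
  Relation.ReflTransGen (FlipStep n 𝕀)

/-- Strict order of the hypergraphic poset. -/
def ltP (n : ℕ) (𝕀 : Finset (Finset ℕ)) (A B : Edge 𝕀 → ℕ) : Prop :=
  leP n 𝕀 A B ∧ A ≠ B

/-- `B` covers `A` in `P_𝕀`. -/
def CoversP (n : ℕ) (𝕀 : Finset (Finset ℕ)) (A B : Edge 𝕀 → ℕ) : Prop :=
  ltP n 𝕀 A B ∧ ¬∃ C, AcycOr 𝕀 C ∧ ltP n 𝕀 A C ∧ ltP n 𝕀 C B

/-- `𝕀` is closed under intersection. -/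
def ClosedUnderIntersection (𝕀 : Finset (Finset ℕ)) : Prop :=
  ∀ I ∈ 𝕀, ∀ J ∈ 𝕀, (I ∩ J).Nonempty → I ∩ J ∈ 𝕀

/-- `π` is a permutation of `[n]` (it fixes everything outside `[1,n]`). -/
def IsPermOn (n : ℕ) (π : Equiv.Perm ℕ) : Prop :=
  ∀ x, x ∉ Finset.Icc 1 n → π x = x

/-- The surjection `Or` from permutations to acyclic orientations:
`Or_π (H) = π (min {p : π p ∈ H})`. -/
noncomputable def orMap (𝕀 : Finset (Finset ℕ)) (π : Equiv.Perm ℕ) : Edge 𝕀 → ℕ :=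
  fun H => π (sInf {p | π p ∈ H.1})

/-- The weak order on permutations of `[n]`, via inclusion of inversion sets. -/
def weakLe (n : ℕ) (σ τ : Equiv.Perm ℕ) : Prop :=
  ∀ a b, 1 ≤ a → a < b → b ≤ n → σ.symm b < σ.symm a → τ.symm b < τ.symm a

/-- `π` contains the pattern 231. -/
def Contains231 (n : ℕ) (π : Equiv.Perm ℕ) : Prop :=
  ∃ p q r, 1 ≤ p ∧ p < q ∧ q < r ∧ r ≤ n ∧ π r < π p ∧ π p < π q

/-- `π` contains the pattern 213. -/
def Contains213 (n : ℕ) (π : Equiv.Perm ℕ) : Prop :=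
  ∃ p q r, 1 ≤ p ∧ p < q ∧ q < r ∧ r ≤ n ∧ π q < π p ∧ π p < π r

/-- The partial order `≺_A`: transitive closure of `A H ≺ h` for `h ∈ H \ {A H}`. -/
def prec (𝕀 : Finset (Finset ℕ)) (A : Edge 𝕀 → ℕ) : ℕ → ℕ → Prop :=
  Relation.TransGen fun a b => ∃ H : Edge 𝕀, A H = a ∧ b ∈ H.1 ∧ b ≠ a

/-- The distributivity condition on interval hypergraphs: for all `I, J ∈ 𝕀` with
`I ⊈ J`, `J ⊈ I` and `I ∩ J ≠ ∅`, the intersection `I ∩ J` is in `𝕀` and is initial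
or final in any `K ∈ 𝕀` containing it. -/
def IsDistribHG (𝕀 : Finset (Finset ℕ)) : Prop :=
  ∀ I ∈ 𝕀, ∀ J ∈ 𝕀, ¬I ⊆ J → ¬J ⊆ I → (I ∩ J).Nonempty →
    (I ∩ J ∈ 𝕀 ∧ ∀ K ∈ 𝕀, I ∩ J ⊆ K → ((I ∩ J).min = K.min ∨ (I ∩ J).max = K.max))

/-- `j ∈ 𝒥_𝕀 = ⋃_{I ∈ 𝕀} (I \ {min I})`. -/
def InJI (𝕀 : Finset (Finset ℕ)) (j : ℕ) : Prop :=
  ∃ I ∈ 𝕀, j ∈ I ∧ ∃ y ∈ I, y < j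

/-- `Jj` is the interval `J_j = ⋂ {I ∈ 𝕀 : j ∈ I \ {min I}}`. -/
def IsJj (𝕀 : Finset (Finset ℕ)) (j : ℕ) (Jj : Finset ℕ) : Prop :=
  ∀ x, x ∈ Jj ↔ ∀ I ∈ 𝕀, j ∈ I → (∃ y ∈ I, y < j) → x ∈ I

/-- `Aj` is the orientation `A_j` (where `μj = min J_j`):
`A_j (J) = j` if `j ∈ J` and `min J = μ_j`, and `A_j (J) = min J` otherwise. -/
def IsAj (𝕀 : Finset (Finset ℕ)) (j μj : ℕ) (Aj : Edge 𝕀 → ℕ) : Prop :=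
  ∀ J : Edge 𝕀,
    (j ∈ J.1 ∧ IsLeast (J.1 : Set ℕ) μj → Aj J = j) ∧
    (¬(j ∈ J.1 ∧ IsLeast (J.1 : Set ℕ) μj) → IsLeast (J.1 : Set ℕ) (Aj J))

/-- `Jij` is the interval `J_{ij} = ⋂ {I ∈ 𝕀 : {i,j} ⊆ I}`. -/
def IsJij (𝕀 : Finset (Finset ℕ)) (i j : ℕ) (Jij : Finset ℕ) : Prop :=
  ∀ x, x ∈ Jij ↔ ∀ I ∈ 𝕀, i ∈ I → j ∈ I → x ∈ I

/-- `(i,j) ∈ ℐ𝒥_𝕀`, where `μij = min J_{ij}`: both lie in a common hyperedge and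
`i = max ([μ_{ij}, j) \ ⋃ {J \ {min J} : J ∈ 𝕀, J ⊆ [μ_{ij}, j)})`. -/
def InIJ (n : ℕ) (𝕀 : Finset (Finset ℕ)) (i j μij : ℕ) : Prop :=
  1 ≤ i ∧ i < j ∧ j ≤ n ∧ (∃ I ∈ 𝕀, i ∈ I ∧ j ∈ I) ∧
    IsGreatest {m | μij ≤ m ∧ m < j ∧
      ∀ J ∈ 𝕀, (∀ x ∈ J, μij ≤ x ∧ x < j) → m ∈ J → ∀ y ∈ J, m ≤ y} i

/-- `Aij` is the orientation `A_{ij}` (where `μij = min J_{ij}`):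
`A_{ij} (J) = j` if `j ∈ J` and `min J ≥ μ_{ij}`, and `A_{ij} (J) = min J` otherwise. -/
def IsAij (𝕀 : Finset (Finset ℕ)) (j μij : ℕ) (Aij : Edge 𝕀 → ℕ) : Prop :=
  ∀ J : Edge 𝕀,
    (j ∈ J.1 ∧ (∀ x ∈ J.1, μij ≤ x) → Aij J = j) ∧
    (¬(j ∈ J.1 ∧ (∀ x ∈ J.1, μij ≤ x)) → IsLeast (J.1 : Set ℕ) (Aij J))

/-- The reversal `x ↦ n - x + 1` on `[n]`. -/
def revPt (n x : ℕ) : ℕ := n - x + 1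

/-- The reversed hypergraph `ℋ↔`. -/
def revHG (n : ℕ) (ℋ : Finset (Finset ℕ)) : Finset (Finset ℕ) :=
  ℋ.image fun H => H.image (revPt n)

/-!
Take a cycle `H₀ → H₁ → ⋯ → H₀` of the arc relation `I → J :⇔ O(J) ∈ I ∖ {O(I)}` and rotate it
so that `m = O(H₁)` is the least value of `O` on it. With `r = O(H₀)` and `s = O(H₂)`, both `m, r`
lie in `H₀` and `m, s` lie in `H₁`, and `m < r, s`. Since hyperedges are intervals, either `r ≤ s`,
so `r ∈ H₁` and `H₀, H₁` form a 2-cycle, or `s < r`, so `s ∈ H₀` and `H₁` can be dropped from the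
cycle. Induction on the length of the cycle concludes.
-/

section ClosedWalk

variable {α : Type*} {R : α → α → Prop} {k : ℕ} {H : ℕ → α}

def IsClosedWalk (R : α → α → Prop) (k : ℕ) (H : ℕ → α) : Prop :=
  H k = H 0 ∧ ∀ p < k, R (H p) (H (p + 1))

lemma isClosedWalk_two {a b : α} (hab : R a b) (hba : R b a) :
    IsClosedWalk R 2 (fun q => if q = 1 then b else a) :=
  ⟨rfl, fun p hp => by interval_cases p <;> simpa⟩

lemma IsClosedWalk.rel_mod (h : IsClosedWalk R k H) (hk : 0 < k) (q : ℕ) :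
    R (H (q % k)) (H ((q + 1) % k)) := by
  have hstep := h.2 (q % k) (Nat.mod_lt q hk)
  rw [← Nat.mod_add_mod]
  rcases Nat.lt_or_eq_of_le (Nat.mod_lt q hk) with hlt | heq
  · rwa [Nat.mod_eq_of_lt hlt]
  · rw [show q % k + 1 = k from heq] at hstep ⊢
    rwa [Nat.mod_self, ← h.1]

lemma IsClosedWalk.rotate (h : IsClosedWalk R k H) (hk : 0 < k) (s : ℕ) :
    IsClosedWalk R k (fun q => H ((q + s) % k)) :=
  ⟨by simp, fun q _ => by simpa only [add_right_comm] using h.rel_mod hk (q + s)⟩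

lemma IsClosedWalk.exists_rotate_min {β : Type*} [LinearOrder β] (h : IsClosedWalk R k H)
    (hk : 0 < k) (f : α → β) : ∃ G, IsClosedWalk R k G ∧ ∀ q, f (G 1) ≤ f (G q) := by
  obtain ⟨p, hp, hmin⟩ := Finset.exists_min_image (Finset.range k) (f ∘ H)
    ⟨0, Finset.mem_range.2 hk⟩
  refine ⟨_, h.rotate hk (p + k - 1), fun q => ?_⟩
  have hG1 : (1 + (p + k - 1)) % k = p := by
    rw [show 1 + (p + k - 1) = p + k by omega, Nat.add_mod_right,
      Nat.mod_eq_of_lt (Finset.mem_range.1 hp)]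
  simp only [hG1]
  exact hmin _ (Finset.mem_range.2 (Nat.mod_lt _ hk))

lemma IsClosedWalk.skip_one (h : IsClosedWalk R (k + 2) H) (h02 : R (H 0) (H 2)) :
    IsClosedWalk R (k + 1) (fun q => if q = 0 then H 0 else H (q + 1)) := by
  refine ⟨by simpa using h.1, fun q hq => ?_⟩
  rcases q with _ | q
  · simpa using h02
  · simpa using h.2 (q + 1 + 1) (by omega)

end ClosedWalk

section OrientedArc

variable {ι α : Type*} {E : ι → Set α} {O : ι → α} {k : ℕ}

def OrientedArc (E : ι → Set α) (O : ι → α) (I J : ι) : Prop :=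
  O J ∈ E I ∧ O J ≠ O I

lemma not_isClosedWalk_orientedArc_one {G : ℕ → ι} : ¬IsClosedWalk (OrientedArc E O) 1 G :=
  fun hG => (hG.2 0 one_pos).2 (by rw [hG.1])

variable [LinearOrder α]

lemma OrientedArc.reverse_or_shortcut (hconv : ∀ i, (E i).OrdConnected) (hO : ∀ i, O i ∈ E i)
    {W Y Z : ι} (hWY : OrientedArc E O W Y) (hYZ : OrientedArc E O Y Z) (hW : O Y ≤ O W)
    (hZ : O Y ≤ O Z) : OrientedArc E O Y W ∨ OrientedArc E O W Z := by
  rcases le_or_gt (O W) (O Z) with hWZ | hZW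
  · exact .inl ⟨(hconv Y).out (hO Y) hYZ.1 ⟨hW, hWZ⟩, (lt_of_le_of_ne hW hWY.2).ne'⟩
  · exact .inr ⟨(hconv W).out hWY.1 (hO W) ⟨hZ, hZW.le⟩, hZW.ne⟩

lemma IsClosedWalk.exists_orientedArc_pair_or_shorter (hconv : ∀ i, (E i).OrdConnected)
    (hO : ∀ i, O i ∈ E i) {H : ℕ → ι} (hH : IsClosedWalk (OrientedArc E O) (k + 2) H) :
    (∃ I J, OrientedArc E O I J ∧ OrientedArc E O J I) ∨
      ∃ G, IsClosedWalk (OrientedArc E O) (k + 1) G := by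
  obtain ⟨G, hG, hmin⟩ := hH.exists_rotate_min (by omega) O
  have h01 : OrientedArc E O (G 0) (G 1) := hG.2 0 (by omega)
  have h12 : OrientedArc E O (G 1) (G 2) := hG.2 1 (by omega)
  rcases OrientedArc.reverse_or_shortcut hconv hO h01 h12 (hmin 0) (hmin 2) with h10 | h02
  · exact .inl ⟨G 0, G 1, h01, h10⟩
  · exact .inr ⟨_, hG.skip_one h02⟩

theorem exists_orientedArc_pair_of_isClosedWalk (hconv : ∀ i, (E i).OrdConnected)
    (hO : ∀ i, O i ∈ E i) {H : ℕ → ι} (hH : IsClosedWalk (OrientedArc E O) (k + 2) H) :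
    ∃ I J, OrientedArc E O I J ∧ OrientedArc E O J I := by
  induction k generalizing H with
  | zero =>
    obtain hpair | ⟨G, hG⟩ := hH.exists_orientedArc_pair_or_shorter hconv hO
    exacts [hpair, absurd hG not_isClosedWalk_orientedArc_one]
  | succ k ih =>
    obtain hpair | ⟨G, hG⟩ := hH.exists_orientedArc_pair_or_shorter hconv hO
    exacts [hpair, ih hG]

end OrientedArc

lemma isAcyclic_iff_not_isClosedWalk {𝕀 : Finset (Finset ℕ)} {O : Edge 𝕀 → ℕ} :
    IsAcyclic 𝕀 O ↔
      ¬∃ k H, 2 ≤ k ∧ IsClosedWalk (OrientedArc (fun H : Edge 𝕀 => (H.1 : Set ℕ)) O) k H :=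
  Iff.rfl

theorem stmt6_general (n : ℕ) (𝕀 : Finset (Finset ℕ))
    (h𝕀 : IsIntervalHypergraph n 𝕀) (O : Edge 𝕀 → ℕ) (hO : IsOrientation 𝕀 O) :
    IsAcyclic 𝕀 O ↔
      ¬∃ I J : Edge 𝕀, O I ∈ J.1 ∧ O I ≠ O J ∧ O J ∈ I.1 ∧ O J ≠ O I := by
  have hconv (H : Edge 𝕀) : (H.1 : Set ℕ).OrdConnected := by
    obtain ⟨a, b, -, -, -, hab⟩ := h𝕀.1 H.1 H.2
    rw [hab, Finset.coe_Icc]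
    exact Set.ordConnected_Icc
  rw [isAcyclic_iff_not_isClosedWalk]
  constructor
  · rintro hacyc ⟨I, J, hJI₁, hJI₂, hIJ⟩
    exact hacyc ⟨2, _, le_rfl, isClosedWalk_two hIJ ⟨hJI₁, hJI₂⟩⟩
  · rintro hno ⟨k, H, hk, hH⟩
    obtain ⟨k, rfl⟩ := Nat.exists_eq_add_of_le' hk
    obtain ⟨I, J, hIJ, hJI⟩ := exists_orientedArc_pair_of_isClosedWalk hconv hO hH
    exact hno ⟨I, J, hJI.1, hJI.2, hIJ⟩

/-- An orientation `O` of an interval hypergraph `𝕀` is acyclic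
iff there are no `I, J ∈ 𝕀` with `O(I) ∈ J \ {O(J)}` and `O(J) ∈ I \ {O(I)}`. -/
theorem stmt6 (n : ℕ) (hn : 1 ≤ n) (𝕀 : Finset (Finset ℕ))
    (h𝕀 : IsIntervalHypergraph n 𝕀) (O : Edge 𝕀 → ℕ) (hO : IsOrientation 𝕀 O) :
    IsAcyclic 𝕀 O ↔
      ¬∃ I J : Edge 𝕀, O I ∈ J.1 ∧ O I ≠ O J ∧ O J ∈ I.1 ∧ O J ≠ O I :=
  stmt6_general n 𝕀 h𝕀 O hO
end IHL
end

section
/- For any two acyclic orientations A and B of an interval hypergraph 𝕀 on [n], A ≤ B in the hypergraphic poset P_𝕀 if and only if A(I) ≤ B(I) for all I ∈ 𝕀. -/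
namespace IHL

/-! A flip only raises values, so `A ≤ B` in `P_𝕀` forces `A ≤ B` pointwise. Conversely, if
`A ≤ B` pointwise and `A ≠ B`, take the edge `H₁` on which `A` and `B` disagree with `(A H₁, B H₁)`
lexicographically maximal, say `(i, j)`, and flip `i` to `j` in every edge containing both on
which `A` is `i`. Choosing `(i, j)` this way, every 2-cycle of the new orientation would give
a 2-cycle of `A` or of `B`, and the new orientation stays below `B`. For interval hypergraphs no
2-cycles already means acyclic: two consecutive arcs turning at a local extremum can be
short-cut, so every walk in the vertex digraph keeps the direction of its first arc and never
closes up. Induction on `∑ B - ∑ A` finishes the proof. -/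

open Relation

lemma IsIntervalHypergraph.ordConnected {n : ℕ} {𝕀 : Finset (Finset ℕ)}
    (h𝕀 : IsIntervalHypergraph n 𝕀) : ∀ H ∈ 𝕀, (H : Set ℕ).OrdConnected := by
  intro H hH
  obtain ⟨a, b, -, -, -, rfl⟩ := h𝕀.1 H hH
  rw [Finset.coe_Icc]
  exact Set.ordConnected_Icc

lemma IsIntervalHypergraph.mem_Icc {n : ℕ} {𝕀 : Finset (Finset ℕ)}
    (h𝕀 : IsIntervalHypergraph n 𝕀) (H : Edge 𝕀) {x : ℕ} (hx : x ∈ H.1) : 1 ≤ x ∧ x ≤ n := by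
  obtain ⟨a, b, ha, -, hb, hH⟩ := h𝕀.1 H.1 H.2
  rw [hH, Finset.mem_Icc] at hx
  omega

section Acyclicity

variable {𝕀 : Finset (Finset ℕ)} {O : Edge 𝕀 → ℕ}

-- `prec 𝕀 O` is by definition `TransGen (precStep 𝕀 O)`.
def precStep (𝕀 : Finset (Finset ℕ)) (O : Edge 𝕀 → ℕ) (a b : ℕ) : Prop :=
  ∃ H : Edge 𝕀, O H = a ∧ b ∈ H.1 ∧ b ≠ a

def NoTwoCycle (𝕀 : Finset (Finset ℕ)) (O : Edge 𝕀 → ℕ) : Prop :=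
  ∀ P Q : Edge 𝕀, O P ∈ Q.1 → O Q ∈ P.1 → O P = O Q

lemma IsAcyclic.noTwoCycle (h : IsAcyclic 𝕀 O) : NoTwoCycle 𝕀 O := by
  intro P Q hPQ hQP
  by_contra hne
  refine h ⟨2, fun p => if p % 2 = 0 then P else Q, le_rfl, rfl, fun p hp => ?_⟩
  interval_cases p
  · simpa using ⟨hQP, Ne.symm hne⟩
  · simpa using ⟨hPQ, hne⟩

lemma isAcyclic_of_irrefl_prec (h : ∀ a, ¬prec 𝕀 O a a) : IsAcyclic 𝕀 O := by
  rintro ⟨k, H, hk, hcyc, hstep⟩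
  have hwalk : ∀ m, 1 ≤ m → m ≤ k → prec 𝕀 O (O (H 0)) (O (H m)) := by
    intro m hm hmk
    induction m, hm using Nat.le_induction with
    | base => exact .single ⟨H 0, rfl, (hstep 0 (by omega)).1, (hstep 0 (by omega)).2⟩
    | succ m _ ih =>
      exact .tail (ih (by omega)) ⟨H m, rfl, (hstep m (by omega)).1, (hstep m (by omega)).2⟩
  exact h _ (hcyc ▸ hwalk k (by omega) le_rfl)

variable (hconv : ∀ H ∈ 𝕀, (H : Set ℕ).OrdConnected) (hO : IsOrientation 𝕀 O)
  (h2 : NoTwoCycle 𝕀 O)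
include hconv hO h2

lemma precStep_of_isMax {a b c : ℕ} (hab : precStep 𝕀 O a b) (hbc : precStep 𝕀 O b c)
    (ha : a < b) (hc : c < b) : a < c ∧ precStep 𝕀 O a c := by
  obtain ⟨H, rfl, hbH, -⟩ := hab
  obtain ⟨H', rfl, hcH', -⟩ := hbc
  have hac : O H < c := by
    by_contra! hca
    have := h2 H H' ((hconv _ H'.2).out hcH' (hO H') ⟨hca, ha.le⟩) hbH
    omega
  exact ⟨hac, H, rfl, (hconv _ H.2).out (hO H) hbH ⟨hac.le, hc.le⟩, hac.ne'⟩

lemma precStep_of_isMin {a b c : ℕ} (hab : precStep 𝕀 O a b) (hbc : precStep 𝕀 O b c)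
    (ha : b < a) (hc : b < c) : c < a ∧ precStep 𝕀 O a c := by
  obtain ⟨H, rfl, hbH, -⟩ := hab
  obtain ⟨H', rfl, hcH', -⟩ := hbc
  have hca : c < O H := by
    by_contra! hac
    have := h2 H H' ((hconv _ H'.2).out (hO H') hcH' ⟨ha.le, hac⟩) hbH
    omega
  exact ⟨hca, H, rfl, (hconv _ H.2).out hbH (hO H) ⟨hc.le, hca.le⟩, hca.ne⟩

lemma lt_of_precStep_of_prec {b c : ℕ} (hbc : prec 𝕀 O b c) :
    ∀ a, precStep 𝕀 O a b → (a < b → a < c) ∧ (b < a → c < a) := by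
  induction hbc using TransGen.head_induction_on with
  | @single b hbc =>
    intro a hab
    have hcb : c ≠ b := hbc.choose_spec.2.2
    constructor <;> intro h <;> rcases hcb.lt_or_gt with hc | hc
    exacts [(precStep_of_isMax hconv hO h2 hab hbc h hc).1, h.trans hc,
      hc.trans h, (precStep_of_isMin hconv hO h2 hab hbc h hc).1]
  | @head b b' hbb' _ ih =>
    intro a hab
    have hb'b : b' ≠ b := hbb'.choose_spec.2.2
    constructor <;> intro h <;> rcases hb'b.lt_or_gt with hb' | hb'
    · obtain ⟨hab', hstep⟩ := precStep_of_isMax hconv hO h2 hab hbb' h hb'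
      exact (ih a hstep).1 hab'
    · exact h.trans ((ih b hbb').1 hb')
    · exact ((ih b hbb').2 hb').trans h
    · obtain ⟨hb'a, hstep⟩ := precStep_of_isMin hconv hO h2 hab hbb' h hb'
      exact (ih a hstep).2 hb'a

lemma not_prec_self (a : ℕ) : ¬prec 𝕀 O a a := by
  intro h
  obtain ⟨b, hab, hba⟩ := TransGen.head'_iff.mp h
  have hne : b ≠ a := hab.choose_spec.2.2
  rcases reflTransGen_iff_eq_or_transGen.mp hba with rfl | hba
  · exact hne rfl
  · have := lt_of_precStep_of_prec hconv hO h2 hba a hab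
    rcases hne.lt_or_gt with h | h
    exacts [lt_irrefl a (this.2 h), lt_irrefl a (this.1 h)]

theorem isAcyclic_of_noTwoCycle : IsAcyclic 𝕀 O :=
  isAcyclic_of_irrefl_prec (not_prec_self hconv hO h2)

end Acyclicity

section Flip

variable {n : ℕ} {𝕀 : Finset (Finset ℕ)}

def FlipsAt (O : Edge 𝕀 → ℕ) (i j : ℕ) (K : Edge 𝕀) : Prop :=
  i ∈ K.1 ∧ j ∈ K.1 ∧ O K = i

open Classical in
noncomputable def flipAt (O : Edge 𝕀 → ℕ) (i j : ℕ) : Edge 𝕀 → ℕ :=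
  fun K => if FlipsAt O i j K then j else O K

variable {O : Edge 𝕀 → ℕ} {i j : ℕ}

lemma flipAt_of_flipsAt {K : Edge 𝕀} (hK : FlipsAt O i j K) : flipAt O i j K = j :=
  if_pos hK

lemma flipAt_of_not_flipsAt {K : Edge 𝕀} (hK : ¬FlipsAt O i j K) : flipAt O i j K = O K :=
  if_neg hK

lemma IsOrientation.flipAt (hO : IsOrientation 𝕀 O) : IsOrientation 𝕀 (flipAt O i j) := by
  intro K
  by_cases hK : FlipsAt O i j K
  · rw [flipAt_of_flipsAt hK]; exact hK.2.1
  · rw [flipAt_of_not_flipsAt hK]; exact hO K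

lemma isIncFlip_flipAt (hi : 1 ≤ i) (hij : i < j) (hj : j ≤ n) (hne : O ≠ flipAt O i j)
    (hnoj : ∀ K : Edge 𝕀, i ∈ K.1 → j ∈ K.1 → O K ≠ j) : IsIncFlip n 𝕀 i j O (flipAt O i j) := by
  refine ⟨hne, hi, hij, hj, fun K => ⟨fun hK => ?_, fun hiK hjK => ⟨fun hOK => ?_, fun hOK => ?_⟩⟩⟩
  · by_cases hflip : FlipsAt O i j K
    · exact ⟨hflip.2.2, flipAt_of_flipsAt hflip⟩
    · exact absurd (flipAt_of_not_flipsAt hflip).symm hK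
  · exact flipAt_of_flipsAt ⟨hiK, hjK, hOK⟩
  · by_contra hOi
    rw [flipAt_of_not_flipsAt (fun h => hOi h.2.2)] at hOK
    exact hnoj K hiK hjK hOK

lemma NoTwoCycle.flipAt (h2 : NoTwoCycle 𝕀 O)
    (hmixed : ∀ P Q : Edge 𝕀, FlipsAt O i j P → ¬FlipsAt O i j Q → j ∈ Q.1 → O Q ∈ P.1 → O Q = j) :
    NoTwoCycle 𝕀 (flipAt O i j) := by
  intro P Q hPQ hQP
  by_cases hP : FlipsAt O i j P <;> by_cases hQ : FlipsAt O i j Q <;>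
    simp only [flipAt_of_flipsAt, flipAt_of_not_flipsAt, hP, hQ, not_false_eq_true] at hPQ hQP ⊢
  · exact (hmixed P Q hP hQ hPQ hQP).symm
  · exact hmixed Q P hQ hP hQP hPQ
  · exact h2 P Q hPQ hQP

end Flip

section MaxDisagreement

variable {𝕀 : Finset (Finset ℕ)} {A B : Edge 𝕀 → ℕ} {i j : ℕ} {H₁ : Edge 𝕀}

structure IsMaxDisagreement (A B : Edge 𝕀 → ℕ) (i j : ℕ) (H₁ : Edge 𝕀) : Prop where
  left_eq : A H₁ = i
  right_eq : B H₁ = j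
  lt : i < j
  le_left : ∀ K, A K ≠ B K → A K ≤ i
  le_right : ∀ K, A K = i → A K ≠ B K → B K ≤ j

lemma exists_isMaxDisagreement (hle : A ≤ B) (hne : A ≠ B) :
    ∃ i j H₁, IsMaxDisagreement A B i j H₁ := by
  classical
  obtain ⟨H, hH⟩ := Function.ne_iff.mp hne
  obtain ⟨H₁, hH₁, hmax⟩ := Finset.exists_max_image (Finset.univ.filter fun K => A K ≠ B K)
    (fun K => toLex (A K, B K)) ⟨H, by simpa using hH⟩
  have hlex : ∀ K, A K ≠ B K → A K < A H₁ ∨ A K = A H₁ ∧ B K ≤ B H₁ := fun K hK =>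
    Prod.Lex.toLex_le_toLex.mp (hmax K (by simpa using hK))
  refine ⟨A H₁, B H₁, H₁, rfl, rfl, lt_of_le_of_ne (hle H₁) (by simpa using hH₁),
    fun K hK => ?_, fun K hKi hK => ?_⟩
  · rcases hlex K hK with h | h <;> omega
  · rcases hlex K hK with h | h <;> omega

lemma IsMaxDisagreement.le_of_flipsAt
    (hconv : ∀ H ∈ 𝕀, (H : Set ℕ).OrdConnected) (hAo : IsOrientation 𝕀 A)
    (hBo : IsOrientation 𝕀 B) (hB2 : NoTwoCycle 𝕀 B) (hle : A ≤ B)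
    (hd : IsMaxDisagreement A B i j H₁) {K : Edge 𝕀} (hK : FlipsAt A i j K) : j ≤ B K := by
  by_contra! hlt
  have hiH₁ : i ∈ H₁.1 := hd.left_eq ▸ hAo H₁
  have hjH₁ : j ∈ H₁.1 := hd.right_eq ▸ hBo H₁
  have := hB2 K H₁ ((hconv _ H₁.2).out hiH₁ hjH₁ ⟨hK.2.2 ▸ hle K, hlt.le⟩)
    (hd.right_eq ▸ hK.2.1)
  exact hlt.ne (this.trans hd.right_eq)

lemma IsMaxDisagreement.flipAt_le
    (hconv : ∀ H ∈ 𝕀, (H : Set ℕ).OrdConnected) (hAo : IsOrientation 𝕀 A)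
    (hBo : IsOrientation 𝕀 B) (hB2 : NoTwoCycle 𝕀 B) (hle : A ≤ B)
    (hd : IsMaxDisagreement A B i j H₁) : flipAt A i j ≤ B := by
  intro K
  by_cases hK : FlipsAt A i j K
  · rw [flipAt_of_flipsAt hK]; exact hd.le_of_flipsAt hconv hAo hBo hB2 hle hK
  · rw [flipAt_of_not_flipsAt hK]; exact hle K

lemma IsMaxDisagreement.eq_of_flipsAt_of_not_flipsAt
    (hconv : ∀ H ∈ 𝕀, (H : Set ℕ).OrdConnected) (hAo : IsOrientation 𝕀 A)
    (hA2 : NoTwoCycle 𝕀 A) (hBo : IsOrientation 𝕀 B) (hB2 : NoTwoCycle 𝕀 B) (hle : A ≤ B)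
    (hd : IsMaxDisagreement A B i j H₁) {P Q : Edge 𝕀} (hP : FlipsAt A i j P)
    (hQ : ¬FlipsAt A i j Q) (hjQ : j ∈ Q.1) (hQP : A Q ∈ P.1) : A Q = j := by
  have hiH₁ : i ∈ H₁.1 := hd.left_eq ▸ hAo H₁
  have hjH₁ : j ∈ H₁.1 := hd.right_eq ▸ hBo H₁
  rcases lt_trichotomy (A Q) i with hlt | heq | hgt
  · have hiQ : i ∈ Q.1 := (hconv _ Q.2).out (hAo Q) hjQ ⟨hlt.le, hd.lt.le⟩
    have := hA2 P Q (hP.2.2 ▸ hiQ) hQP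
    rw [hP.2.2] at this
    omega
  · exact absurd ⟨heq ▸ hAo Q, hjQ, heq⟩ hQ
  · have hAB : A Q = B Q := by
      by_contra h
      exact absurd (hd.le_left Q h) (by omega)
    rcases le_total (A Q) j with hj | hj
    · have := hB2 Q H₁ (hAB ▸ (hconv _ H₁.2).out hiH₁ hjH₁ ⟨hgt.le, hj⟩) (hd.right_eq ▸ hjQ)
      rw [← hAB, hd.right_eq] at this
      exact this
    · have hjBP := hd.le_of_flipsAt hconv hAo hBo hB2 hle hP
      have hBP : B P = j := le_antisymm
        (hd.le_right P hP.2.2 (by rw [hP.2.2]; exact (hd.lt.trans_le hjBP).ne)) hjBP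
      have := hB2 P Q (hBP ▸ hjQ) (hAB ▸ hQP)
      omega

lemma IsMaxDisagreement.acycOr_flipAt
    (hconv : ∀ H ∈ 𝕀, (H : Set ℕ).OrdConnected) (hA : AcycOr 𝕀 A) (hB : AcycOr 𝕀 B)
    (hle : A ≤ B) (hd : IsMaxDisagreement A B i j H₁) : AcycOr 𝕀 (flipAt A i j) :=
  ⟨hA.1.flipAt, isAcyclic_of_noTwoCycle hconv hA.1.flipAt <| hA.2.noTwoCycle.flipAt
    fun _ _ hP hQ hjQ hQP => hd.eq_of_flipsAt_of_not_flipsAt hconv hA.1 hA.2.noTwoCycle hB.1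
      hB.2.noTwoCycle hle hP hQ hjQ hQP⟩

end MaxDisagreement

lemma exists_flipStep_le {n : ℕ} {𝕀 : Finset (Finset ℕ)} (h𝕀 : IsIntervalHypergraph n 𝕀)
    {A B : Edge 𝕀 → ℕ} (hA : AcycOr 𝕀 A) (hB : AcycOr 𝕀 B) (hle : A ≤ B) (hne : A ≠ B) :
    ∃ A', FlipStep n 𝕀 A A' ∧ A' ≤ B := by
  obtain ⟨i, j, H₁, hd⟩ := exists_isMaxDisagreement hle hne
  have hiH₁ : i ∈ H₁.1 := hd.left_eq ▸ hA.1 H₁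
  have hjH₁ : j ∈ H₁.1 := hd.right_eq ▸ hB.1 H₁
  have hne' : A ≠ flipAt A i j := fun h => by
    have := congrFun h H₁
    rw [flipAt_of_flipsAt ⟨hiH₁, hjH₁, hd.left_eq⟩, hd.left_eq] at this
    exact hd.lt.ne this
  have hnoj : ∀ K : Edge 𝕀, i ∈ K.1 → j ∈ K.1 → A K ≠ j := fun K hiK _ hAK => by
    have := hA.2.noTwoCycle H₁ K (hd.left_eq ▸ hiK) (hAK ▸ hjH₁)
    rw [hd.left_eq, hAK] at this
    exact hd.lt.ne this
  refine ⟨flipAt A i j, ⟨hA, hd.acycOr_flipAt h𝕀.ordConnected hA hB hle, i, j,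
    isIncFlip_flipAt (h𝕀.mem_Icc H₁ hiH₁).1 hd.lt (h𝕀.mem_Icc H₁ hjH₁).2 hne' hnoj⟩,
    hd.flipAt_le h𝕀.ordConnected hA.1 hB.1 hB.2.noTwoCycle hle⟩

lemma FlipStep.lt {n : ℕ} {𝕀 : Finset (Finset ℕ)} {O O' : Edge 𝕀 → ℕ}
    (h : FlipStep n 𝕀 O O') : O < O' := by
  obtain ⟨-, -, i, j, hne, -, hij, -, hflip⟩ := h
  refine lt_of_le_of_ne (fun H => show O H ≤ O' H from ?_) hne
  by_cases hH : O H = O' H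
  · exact hH.le
  · obtain ⟨hi, hj⟩ := (hflip H).1 hH
    omega

lemma leP.le {n : ℕ} {𝕀 : Finset (Finset ℕ)} {A B : Edge 𝕀 → ℕ} (h : leP n 𝕀 A B) : A ≤ B :=
  reflTransGen_le_of_le (r := (· ≤ ·)) (fun _ _ h => h.lt.le) A B h

theorem leP_of_le {n : ℕ} {𝕀 : Finset (Finset ℕ)} (h𝕀 : IsIntervalHypergraph n 𝕀)
    {A B : Edge 𝕀 → ℕ} (hA : AcycOr 𝕀 A) (hB : AcycOr 𝕀 B) (hle : A ≤ B) : leP n 𝕀 A B := by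
  by_cases hAB : A = B
  · exact hAB ▸ .refl
  obtain ⟨A', hstep, hA'B⟩ := exists_flipStep_le h𝕀 hA hB hle hAB
  exact .head hstep (leP_of_le h𝕀 hstep.2.1 hB hA'B)
termination_by ∑ H, B H - ∑ H, A H
decreasing_by
  have hlt : ∑ H, A H < ∑ H, A' H := Fintype.sum_strictMono hstep.lt
  have hA'B : ∑ H, A' H ≤ ∑ H, B H := Fintype.sum_mono hA'B
  omega

theorem stmt8_general (n : ℕ) (𝕀 : Finset (Finset ℕ))
    (h𝕀 : IsIntervalHypergraph n 𝕀) (A B : Edge 𝕀 → ℕ)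
    (hA : AcycOr 𝕀 A) (hB : AcycOr 𝕀 B) :
    leP n 𝕀 A B ↔ ∀ H : Edge 𝕀, A H ≤ B H :=
  ⟨leP.le, leP_of_le h𝕀 hA hB⟩

/-- For acyclic orientations `A, B` of an interval hypergraph `𝕀`,
`A ≤ B` in `P_𝕀` iff `A(I) ≤ B(I)` for all `I ∈ 𝕀`. -/
theorem stmt8 (n : ℕ) (hn : 1 ≤ n) (𝕀 : Finset (Finset ℕ))
    (h𝕀 : IsIntervalHypergraph n 𝕀) (A B : Edge 𝕀 → ℕ)
    (hA : AcycOr 𝕀 A) (hB : AcycOr 𝕀 B) :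
    leP n 𝕀 A B ↔ ∀ H : Edge 𝕀, A H ≤ B H :=
  stmt8_general n 𝕀 h𝕀 A B hA hB
end IHL
end
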